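/- arXiv:2110.06082 — 4 statements merged into one kernel-verified Lean document; each statement's English description precedes it below -/
import Mathlib

section
/- Let X, Y, Z be discrete random variables forming a Markov chain X → Y → Z (i.e. X and Z are conditionally independent given Y), with all joint probabilities strictly positive and Y taking values in {0,1}. If X is not independent of Y and Y is not independent of Z, then X is not independent of Z. -/
open scoped Classical BigOperators
open Finset

noncomputable section

/-- Probability of an event under a mass function on a finite sample space. -/
def prE {Ω : Type*} [Fintype Ω] (p : Ω → ℝ) (s : Set Ω) : ℝ :=
  ∑ ω, if ω ∈ s then p ω else 0

/-- Conditional probability P(s | t). -/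
def condPr {Ω : Type*} [Fintype Ω] (p : Ω → ℝ) (s t : Set Ω) : ℝ :=
  prE p (s ∩ t) / prE p t

/-- Independence of two random variables. -/
def IndepRV {Ω α β : Type*} [Fintype Ω] (p : Ω → ℝ) (X : Ω → α) (Y : Ω → β) : Prop :=
  ∀ a b, prE p {ω | X ω = a ∧ Y ω = b} = prE p {ω | X ω = a} * prE p {ω | Y ω = b}

/-- Conditional independence of X and Y given Z (cross-multiplied form). -/
def CondIndepRV {Ω α β γ : Type*} [Fintype Ω] (p : Ω → ℝ)
    (X : Ω → α) (Y : Ω → β) (Z : Ω → γ) : Prop :=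
  ∀ a b c,
    prE p {ω | X ω = a ∧ Y ω = b ∧ Z ω = c} * prE p {ω | Z ω = c} =
      prE p {ω | X ω = a ∧ Z ω = c} * prE p {ω | Y ω = b ∧ Z ω = c}

lemma prE_congr {Ω : Type*} [Fintype Ω] (p : Ω → ℝ) {s t : Set Ω}
    (h : ∀ ω, ω ∈ s ↔ ω ∈ t) : prE p s = prE p t := by
  unfold prE
  exact Finset.sum_congr rfl fun ω _ => by simp only [h ω]

lemma prE_bool_split {Ω : Type*} [Fintype Ω] (p : Ω → ℝ) (S : Ω → Prop) (Y : Ω → Bool) :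
    prE p {ω | S ω} = prE p {ω | S ω ∧ Y ω = false} + prE p {ω | S ω ∧ Y ω = true} := by
  unfold prE
  rw [← Finset.sum_add_distrib]
  refine Finset.sum_congr rfl fun ω _ => ?_
  by_cases h : S ω
  · cases hY : Y ω <;> simp [h, hY]
  · simp [h]

lemma prE_decomp {Ω β : Type*} [Fintype Ω] (p : Ω → ℝ) (S : Ω → Prop) (f : Ω → β)
    (t : Finset β) (ht : ∀ ω, f ω ∈ t) :
    prE p {ω | S ω} = ∑ b ∈ t, prE p {ω | S ω ∧ f ω = b} := by
  unfold prE
  rw [Finset.sum_comm]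
  refine Finset.sum_congr rfl fun ω _ => ?_
  by_cases h : S ω
  · simp only [Set.mem_setOf_eq, h, true_and]
    rw [Finset.sum_ite_eq t (f ω) (fun _ => p ω)]
    simp [ht ω]
  · simp [h]

/-- If X → Y → Z is a Markov chain (X ⊥ Z | Y) with all joint
probabilities strictly positive and Y binary, and X is not independent of Y and
Y is not independent of Z, then X is not independent of Z. -/
theorem markov_chain_dependence_propagates
    {Ω α γ : Type*} [Fintype Ω]
    (p : Ω → ℝ) (hsum : ∑ ω, p ω = 1)
    (X : Ω → α) (Y : Ω → Bool) (Z : Ω → γ)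
    (hpos : ∀ (a : α) (y : Bool) (c : γ), 0 < prE p {ω | X ω = a ∧ Y ω = y ∧ Z ω = c})
    (hMarkov : CondIndepRV p X Z Y)
    (hXY : ¬ IndepRV p X Y) (hYZ : ¬ IndepRV p Y Z) :
    ¬ IndepRV p X Z := by
  intro hind
  -- Ω is nonempty
  have hne : Nonempty Ω := by
    by_contra h
    rw [not_nonempty_iff] at h
    rw [Finset.univ_eq_empty, Finset.sum_empty] at hsum
    norm_num at hsum
  obtain ⟨ω0⟩ := hne
  -- P(Y = y) > 0 for each y
  have hPy : ∀ y : Bool, 0 < prE p {ω | Y ω = y} := by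
    intro y
    have hdec := prE_decomp p (fun ω => Y ω = y) (fun ω => (X ω, Z ω))
      ((Finset.univ.image X) ×ˢ (Finset.univ.image Z))
      (fun ω => Finset.mem_product.2
        ⟨Finset.mem_image_of_mem X (Finset.mem_univ ω),
         Finset.mem_image_of_mem Z (Finset.mem_univ ω)⟩)
    rw [show {ω | Y ω = y} = {ω | (fun ω => Y ω = y) ω} from rfl, hdec]
    apply Finset.sum_pos
    · rintro ⟨a, c⟩ _
      have heq : prE p {ω | (fun ω => Y ω = y) ω ∧ (fun ω => (X ω, Z ω)) ω = (a, c)}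
          = prE p {ω | X ω = a ∧ Y ω = y ∧ Z ω = c} := by
        refine prE_congr p fun ω => ?_
        simp only [Set.mem_setOf_eq, Prod.mk.injEq]
        tauto
      rw [heq]
      exact hpos a y c
    · exact ⟨(X ω0, Z ω0), Finset.mem_product.2
        ⟨Finset.mem_image_of_mem X (Finset.mem_univ ω0),
         Finset.mem_image_of_mem Z (Finset.mem_univ ω0)⟩⟩
  -- P(Y=false) + P(Y=true) = 1
  have hone : prE p {ω | Y ω = false} + prE p {ω | Y ω = true} = 1 := by
    have h := prE_bool_split p (fun _ => True) Y
    have h1 : prE p {ω | (fun _ : Ω => True) ω} = 1 := by simp [prE, hsum]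
    have e0 : prE p {ω | (fun _ : Ω => True) ω ∧ Y ω = false} = prE p {ω | Y ω = false} :=
      prE_congr p fun ω => by simp
    have e1 : prE p {ω | (fun _ : Ω => True) ω ∧ Y ω = true} = prE p {ω | Y ω = true} :=
      prE_congr p fun ω => by simp
    rw [h1, e0, e1] at h
    linarith
  -- witnesses of dependence
  obtain ⟨a, y, hay⟩ : ∃ a y,
      prE p {ω | X ω = a ∧ Y ω = y} ≠ prE p {ω | X ω = a} * prE p {ω | Y ω = y} := by
    by_contra h
    push_neg at h
    exact hXY fun a b => h a b
  obtain ⟨y', c, hyc⟩ : ∃ y' c,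
      prE p {ω | Y ω = y' ∧ Z ω = c} ≠ prE p {ω | Y ω = y'} * prE p {ω | Z ω = c} := by
    by_contra h
    push_neg at h
    exact hYZ fun a b => h a b
  -- marginal split facts for this a, c
  have hfalse : prE p {ω | Y ω = false} = 1 - prE p {ω | Y ω = true} := by linarith
  have hmA : prE p {ω | X ω = a ∧ Y ω = false}
      = prE p {ω | X ω = a} - prE p {ω | X ω = a ∧ Y ω = true} := by
    have h := prE_bool_split p (fun ω => X ω = a) Y
    have e0 : prE p {ω | (fun ω => X ω = a) ω ∧ Y ω = false}
        = prE p {ω | X ω = a ∧ Y ω = false} := prE_congr p fun ω => by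
      simp only [Set.mem_setOf_eq]
    have e1 : prE p {ω | (fun ω => X ω = a) ω ∧ Y ω = true}
        = prE p {ω | X ω = a ∧ Y ω = true} := prE_congr p fun ω => by
      simp only [Set.mem_setOf_eq]
    rw [e0, e1] at h
    linarith [h]
  have hnB : prE p {ω | Y ω = false ∧ Z ω = c}
      = prE p {ω | Z ω = c} - prE p {ω | Y ω = true ∧ Z ω = c} := by
    have h := prE_bool_split p (fun ω => Z ω = c) Y
    have e0 : prE p {ω | (fun ω => Z ω = c) ω ∧ Y ω = false}
        = prE p {ω | Y ω = false ∧ Z ω = c} := prE_congr p fun ω => by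
      simp only [Set.mem_setOf_eq]; tauto
    have e1 : prE p {ω | (fun ω => Z ω = c) ω ∧ Y ω = true}
        = prE p {ω | Y ω = true ∧ Z ω = c} := prE_congr p fun ω => by
      simp only [Set.mem_setOf_eq]; tauto
    rw [e0, e1] at h
    linarith [h]
  have hD : prE p {ω | X ω = a ∧ Z ω = c}
      = prE p {ω | X ω = a ∧ Y ω = false ∧ Z ω = c}
        + prE p {ω | X ω = a ∧ Y ω = true ∧ Z ω = c} := by
    have h := prE_bool_split p (fun ω => X ω = a ∧ Z ω = c) Y
    have e0 : prE p {ω | (fun ω => X ω = a ∧ Z ω = c) ω ∧ Y ω = false}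
        = prE p {ω | X ω = a ∧ Y ω = false ∧ Z ω = c} := prE_congr p fun ω => by
      simp only [Set.mem_setOf_eq]; tauto
    have e1 : prE p {ω | (fun ω => X ω = a ∧ Z ω = c) ω ∧ Y ω = true}
        = prE p {ω | X ω = a ∧ Y ω = true ∧ Z ω = c} := prE_congr p fun ω => by
      simp only [Set.mem_setOf_eq]; tauto
    rw [e0, e1] at h
    exact h
  -- Markov facts
  have hMk : ∀ y : Bool,
      prE p {ω | X ω = a ∧ Y ω = y ∧ Z ω = c} * prE p {ω | Y ω = y}
        = prE p {ω | X ω = a ∧ Y ω = y} * prE p {ω | Y ω = y ∧ Z ω = c} := by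
    intro y
    have h := hMarkov a c y
    have e0 : prE p {ω | X ω = a ∧ Z ω = c ∧ Y ω = y}
        = prE p {ω | X ω = a ∧ Y ω = y ∧ Z ω = c} := prE_congr p fun ω => by
      simp only [Set.mem_setOf_eq]; tauto
    have e1 : prE p {ω | Z ω = c ∧ Y ω = y} = prE p {ω | Y ω = y ∧ Z ω = c} :=
      prE_congr p fun ω => by simp only [Set.mem_setOf_eq]; tauto
    rw [e0, e1] at h
    exact h
  have e2 := hMk true
  have e1 := hMk false
  rw [hfalse, hmA, hnB] at e1
  -- independence of X, Z at (a, c)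
  have hiac := hind a c
  -- u ≠ 0
  have hu : prE p {ω | X ω = a ∧ Y ω = true}
      - prE p {ω | X ω = a} * prE p {ω | Y ω = true} ≠ 0 := by
    intro h
    apply hay
    cases y
    · rw [hmA, hfalse]
      linear_combination -h
    · linear_combination h
  have hv : prE p {ω | Y ω = true ∧ Z ω = c}
      - prE p {ω | Y ω = true} * prE p {ω | Z ω = c} ≠ 0 := by
    intro h
    apply hyc
    cases y'
    · rw [hnB, hfalse]
      linear_combination -h
    · linear_combination h
  have huv : (prE p {ω | X ω = a ∧ Y ω = true}
        - prE p {ω | X ω = a} * prE p {ω | Y ω = true})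
      * (prE p {ω | Y ω = true ∧ Z ω = c}
        - prE p {ω | Y ω = true} * prE p {ω | Z ω = c}) = 0 := by
    linear_combination (-(prE p {ω | Y ω = true})) * e1
      - (1 - prE p {ω | Y ω = true}) * e2
      - (prE p {ω | Y ω = true} * (1 - prE p {ω | Y ω = true})) * hD
      + (prE p {ω | Y ω = true} * (1 - prE p {ω | Y ω = true})) * hiac
  rcases mul_eq_zero.mp huv with h | h
  · exact hu h
  · exact hv h

end
end

section
/- Let P be a strictly positive distribution on discrete random variables X_1,...,X_d satisfying the intersection property of conditional independence. If m_1 and m_2 are both Markov blankets of X_k relative to S ⊆ {X_1,...,X_d} (i.e. X_k ⊥ S\m_i | m_i for i=1,2), then m_1 ∩ m_2 is also a Markov blanket of X_k relative to S. -/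
open scoped Classical BigOperators
open Finset

noncomputable section

namespace MBAux

variable {Ω β : Type*} [Fintype Ω] {d : ℕ}

def Ev (X : Fin d → Ω → β) (T : Finset (Fin d)) (v : Fin d → β) : Set Ω :=
  {ω | ∀ i ∈ T, X i ω = v i}

def CI (p : Ω → ℝ) (X : Fin d → Ω → β) (k : Fin d) (A C : Finset (Fin d)) : Prop :=
  ∀ (x : β) (v : Fin d → β),
    prE p ({ω | X k ω = x} ∩ Ev X A v ∩ Ev X C v) * prE p (Ev X C v) =
      prE p ({ω | X k ω = x} ∩ Ev X C v) * prE p (Ev X A v ∩ Ev X C v)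

lemma Ev_union (X : Fin d → Ω → β) (T₁ T₂ : Finset (Fin d)) (v : Fin d → β) :
    Ev X (T₁ ∪ T₂) v = Ev X T₁ v ∩ Ev X T₂ v := by
  ext ω
  simp [Ev, Finset.mem_union, or_imp, forall_and, Set.mem_inter_iff]

lemma Ev_congr (X : Fin d → Ω → β) {T : Finset (Fin d)} {v w : Fin d → β}
    (h : ∀ i ∈ T, v i = w i) : Ev X T v = Ev X T w := by
  ext ω
  simp only [Ev, Set.mem_setOf_eq]
  exact forall₂_congr fun i hi => by rw [h i hi]

def extd (Y : Finset (Fin d)) (y : ↥Y → β) (v : Fin d → β) : Fin d → β :=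
  fun i => if h : i ∈ Y then y ⟨i, h⟩ else v i

lemma Ev_extd (X : Fin d → Ω → β) (Y : Finset (Fin d)) (y : ↥Y → β) (v : Fin d → β) :
    Ev X Y (extd Y y v) = {ω | (fun i : ↥Y => X i.1 ω) = y} := by
  ext ω
  simp only [Ev, Set.mem_setOf_eq, funext_iff, Subtype.forall]
  exact forall₂_congr fun i hi => by rw [extd, dif_pos hi]

lemma Ev_extd_of_disjoint (X : Fin d → Ω → β) {Y Z : Finset (Fin d)} (h : Disjoint Y Z)
    (y : ↥Y → β) (v : Fin d → β) :
    Ev X Z (extd Y y v) = Ev X Z v :=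
  Ev_congr X fun i hi => by
    rw [extd, dif_neg (fun hY => (Finset.disjoint_left.mp h) hY hi)]

lemma prE_fiber (p : Ω → ℝ) (X : Fin d → Ω → β) (Y : Finset (Fin d)) (s : Set Ω) :
    prE p s = ∑ y ∈ Finset.univ.image (fun ω => (fun i : ↥Y => X i.1 ω)),
      prE p ({ω | (fun i : ↥Y => X i.1 ω) = y} ∩ s) := by
  unfold prE
  rw [Finset.sum_comm]
  refine Finset.sum_congr rfl fun ω _ => ?_
  rw [Finset.sum_eq_single_of_mem (fun i : ↥Y => X i.1 ω)
    (Finset.mem_image_of_mem _ (Finset.mem_univ ω))]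
  · simp
  · intro y _ hne
    rw [if_neg]
    exact fun hmem => hne hmem.1.symm

lemma prE_Ev_pos (p : Ω → ℝ) (X : Fin d → Ω → β)
    (hpos : ∀ v : Fin d → β, 0 < prE p {ω | ∀ i, X i ω = v i})
    (T : Finset (Fin d)) (v : Fin d → β) : 0 < prE p (Ev X T v) := by
  have huniv : ∀ y : ↥(Finset.univ : Finset (Fin d)) → β,
      {ω : Ω | (fun i : ↥(Finset.univ : Finset (Fin d)) => X i.1 ω) = y}
        = {ω : Ω | ∀ i, X i ω = y ⟨i, Finset.mem_univ i⟩} := by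
    intro y; ext ω; simp [funext_iff, Subtype.forall]
  have hne : ∃ ω : Ω, ∀ i, X i ω = v i := by
    by_contra hcon
    push_neg at hcon
    have hz : prE p {ω : Ω | ∀ i, X i ω = v i} = 0 := by
      unfold prE
      refine Finset.sum_eq_zero fun ω _ => ?_
      rw [if_neg]
      intro hmem
      obtain ⟨i, hi⟩ := hcon ω
      exact hi (hmem i)
    linarith [hpos v]
  obtain ⟨ω₀, hω₀⟩ := hne
  rw [prE_fiber p X Finset.univ (Ev X T v)]
  apply Finset.sum_pos'
  · intro y _
    by_cases hc : ∀ i ∈ T, y ⟨i, Finset.mem_univ i⟩ = v i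
    · have he : {ω : Ω | (fun i : ↥(Finset.univ : Finset (Fin d)) => X i.1 ω) = y} ∩ Ev X T v
          = {ω : Ω | ∀ i, X i ω = y ⟨i, Finset.mem_univ i⟩} := by
        rw [huniv]
        ext ω
        simp only [Set.mem_inter_iff, Set.mem_setOf_eq, Ev]
        constructor
        · exact fun h => h.1
        · exact fun h => ⟨h, fun i hi => by rw [h i, hc i hi]⟩
      rw [he]
      exact le_of_lt (hpos _)
    · have he : {ω : Ω | (fun i : ↥(Finset.univ : Finset (Fin d)) => X i.1 ω) = y} ∩ Ev X T v
          = (∅ : Set Ω) := by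
        rw [huniv]
        ext ω
        simp only [Set.mem_inter_iff, Set.mem_setOf_eq, Ev, Set.mem_empty_iff_false, iff_false]
        rintro ⟨h1, h2⟩
        exact hc fun i hi => by rw [← h1 i, h2 i hi]
      rw [he]
      simp [prE]
  · refine ⟨fun i : ↥(Finset.univ : Finset (Fin d)) => X i.1 ω₀,
      Finset.mem_image_of_mem _ (Finset.mem_univ ω₀), ?_⟩
    have he : {ω : Ω | (fun i : ↥(Finset.univ : Finset (Fin d)) => X i.1 ω)
          = fun i : ↥(Finset.univ : Finset (Fin d)) => X i.1 ω₀} ∩ Ev X T v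
        = {ω : Ω | ∀ i, X i ω = X i ω₀} := by
      ext ω
      simp only [Set.mem_inter_iff, Set.mem_setOf_eq, Ev, funext_iff, Subtype.forall]
      constructor
      · exact fun h i => h.1 i (Finset.mem_univ i)
      · exact fun h => ⟨fun i _ => h i, fun i hi => by rw [h i, hω₀ i]⟩
    rw [he]
    exact hpos _

lemma CI_decomp (p : Ω → ℝ) (X : Fin d → Ω → β) {k : Fin d} {Y W Z : Finset (Fin d)}
    (hYW : Disjoint Y W) (hYZ : Disjoint Y Z)
    (h : CI p X k (Y ∪ W) Z) : CI p X k W Z := by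
  intro x v
  rw [prE_fiber p X Y ({ω | X k ω = x} ∩ Ev X W v ∩ Ev X Z v),
      prE_fiber p X Y (Ev X W v ∩ Ev X Z v), Finset.sum_mul, Finset.mul_sum]
  refine Finset.sum_congr rfl fun y _ => ?_
  have h1 := h x (extd Y y v)
  have eZ : Ev X Z (extd Y y v) = Ev X Z v := Ev_extd_of_disjoint X hYZ y v
  have eW : Ev X W (extd Y y v) = Ev X W v := Ev_extd_of_disjoint X hYW y v
  have eYW : Ev X (Y ∪ W) (extd Y y v)
      = {ω | (fun i : ↥Y => X i.1 ω) = y} ∩ Ev X W v := by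
    rw [Ev_union, Ev_extd, eW]
  rw [eZ, eYW] at h1
  have r1 : {ω : Ω | X k ω = x} ∩ ({ω | (fun i : ↥Y => X i.1 ω) = y} ∩ Ev X W v) ∩ Ev X Z v
      = {ω | (fun i : ↥Y => X i.1 ω) = y} ∩ ({ω | X k ω = x} ∩ Ev X W v ∩ Ev X Z v) := by
    ext ω; simp only [Set.mem_inter_iff]; tauto
  have r2 : {ω : Ω | (fun i : ↥Y => X i.1 ω) = y} ∩ Ev X W v ∩ Ev X Z v
      = {ω | (fun i : ↥Y => X i.1 ω) = y} ∩ (Ev X W v ∩ Ev X Z v) := by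
    rw [Set.inter_assoc]
  rw [r1, r2] at h1
  exact h1

lemma CI_weakUnion (p : Ω → ℝ) (X : Fin d → Ω → β)
    (hpos : ∀ v : Fin d → β, 0 < prE p {ω | ∀ i, X i ω = v i})
    {k : Fin d} {Y W Z : Finset (Fin d)}
    (hYW : Disjoint Y W) (hYZ : Disjoint Y Z)
    (h : CI p X k (Y ∪ W) Z) : CI p X k Y (W ∪ Z) := by
  have hdec := CI_decomp p X hYW hYZ h
  intro x v
  have h1 := h x v
  have h2 := hdec x v
  have hz := prE_Ev_pos p X hpos Z v
  rw [Ev_union] at h1 ⊢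
  have rA : {ω : Ω | X k ω = x} ∩ (Ev X Y v ∩ Ev X W v) ∩ Ev X Z v
      = {ω : Ω | X k ω = x} ∩ Ev X Y v ∩ (Ev X W v ∩ Ev X Z v) := by
    ext ω; simp only [Set.mem_inter_iff]; tauto
  have rB : Ev X Y v ∩ Ev X W v ∩ Ev X Z v = Ev X Y v ∩ (Ev X W v ∩ Ev X Z v) := by
    rw [Set.inter_assoc]
  have rC : {ω : Ω | X k ω = x} ∩ (Ev X W v ∩ Ev X Z v)
      = {ω : Ω | X k ω = x} ∩ Ev X W v ∩ Ev X Z v := by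
    rw [Set.inter_assoc]
  rw [rA, rB] at h1
  rw [rC]
  set a := prE p ({ω : Ω | X k ω = x} ∩ Ev X Y v ∩ (Ev X W v ∩ Ev X Z v))
  set z := prE p (Ev X Z v)
  set wz := prE p (Ev X W v ∩ Ev X Z v)
  set xz := prE p ({ω : Ω | X k ω = x} ∩ Ev X Z v)
  set ywz := prE p (Ev X Y v ∩ (Ev X W v ∩ Ev X Z v))
  set xwz := prE p ({ω : Ω | X k ω = x} ∩ Ev X W v ∩ Ev X Z v)
  have key : a * wz * z = xwz * ywz * z := by linear_combination wz * h1 - ywz * h2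
  exact mul_right_cancel₀ (ne_of_gt hz) key

lemma CI_iff (p : Ω → ℝ) (X : Fin d → Ω → β) [Nonempty β] {k : Fin d}
    {A C : Finset (Fin d)} (hAC : Disjoint A C) :
    CondIndepRV p (X k) (fun ω => fun i : ↥A => X i.1 ω) (fun ω => fun i : ↥C => X i.1 ω)
      ↔ CI p X k A C := by
  constructor
  · intro h x v
    have h1 := h x (fun i : ↥A => v i.1) (fun i : ↥C => v i.1)
    have e1 : {ω : Ω | X k ω = x ∧ (fun i : ↥A => X i.1 ω) = (fun i : ↥A => v i.1)
          ∧ (fun i : ↥C => X i.1 ω) = (fun i : ↥C => v i.1)}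
        = {ω : Ω | X k ω = x} ∩ Ev X A v ∩ Ev X C v := by
      ext ω
      simp only [Set.mem_setOf_eq, Set.mem_inter_iff, Ev, funext_iff, Subtype.forall]
      tauto
    have e2 : {ω : Ω | (fun i : ↥C => X i.1 ω) = (fun i : ↥C => v i.1)} = Ev X C v := by
      ext ω
      simp only [Set.mem_setOf_eq, Ev, funext_iff, Subtype.forall]
    have e3 : {ω : Ω | X k ω = x ∧ (fun i : ↥C => X i.1 ω) = (fun i : ↥C => v i.1)}
        = {ω : Ω | X k ω = x} ∩ Ev X C v := by
      ext ω
      simp only [Set.mem_setOf_eq, Set.mem_inter_iff, Ev, funext_iff, Subtype.forall]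
    have e4 : {ω : Ω | (fun i : ↥A => X i.1 ω) = (fun i : ↥A => v i.1)
          ∧ (fun i : ↥C => X i.1 ω) = (fun i : ↥C => v i.1)}
        = Ev X A v ∩ Ev X C v := by
      ext ω
      simp only [Set.mem_setOf_eq, Set.mem_inter_iff, Ev, funext_iff, Subtype.forall]
    rw [e1, e2, e3, e4] at h1
    exact h1
  · intro h x a c
    classical
    have h1 := h x (fun i => if hA : i ∈ A then a ⟨i, hA⟩
      else if hC : i ∈ C then c ⟨i, hC⟩ else Classical.arbitrary β)
    set v : Fin d → β := fun i => if hA : i ∈ A then a ⟨i, hA⟩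
      else if hC : i ∈ C then c ⟨i, hC⟩ else Classical.arbitrary β with hv
    have hvA : ∀ i (hi : i ∈ A), v i = a ⟨i, hi⟩ := fun i hi => by
      simp only [hv, dif_pos hi]
    have hvC : ∀ i (hi : i ∈ C), v i = c ⟨i, hi⟩ := fun i hi => by
      have hiA : i ∉ A := Finset.disjoint_right.mp hAC hi
      simp only [hv, dif_neg hiA, dif_pos hi]
    have eA : Ev X A v = {ω : Ω | (fun i : ↥A => X i.1 ω) = a} := by
      ext ω
      simp only [Ev, Set.mem_setOf_eq, funext_iff, Subtype.forall]
      exact forall₂_congr fun i hi => by rw [hvA i hi]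
    have eC : Ev X C v = {ω : Ω | (fun i : ↥C => X i.1 ω) = c} := by
      ext ω
      simp only [Ev, Set.mem_setOf_eq, funext_iff, Subtype.forall]
      exact forall₂_congr fun i hi => by rw [hvC i hi]
    rw [eA, eC] at h1
    have e1 : {ω : Ω | X k ω = x} ∩ {ω : Ω | (fun i : ↥A => X i.1 ω) = a}
          ∩ {ω : Ω | (fun i : ↥C => X i.1 ω) = c}
        = {ω : Ω | X k ω = x ∧ (fun i : ↥A => X i.1 ω) = a
          ∧ (fun i : ↥C => X i.1 ω) = c} := by
      ext ω; simp only [Set.mem_inter_iff, Set.mem_setOf_eq]; tauto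
    have e3 : {ω : Ω | X k ω = x} ∩ {ω : Ω | (fun i : ↥C => X i.1 ω) = c}
        = {ω : Ω | X k ω = x ∧ (fun i : ↥C => X i.1 ω) = c} := by
      ext ω; simp only [Set.mem_inter_iff, Set.mem_setOf_eq]
    have e4 : {ω : Ω | (fun i : ↥A => X i.1 ω) = a} ∩ {ω : Ω | (fun i : ↥C => X i.1 ω) = c}
        = {ω : Ω | (fun i : ↥A => X i.1 ω) = a ∧ (fun i : ↥C => X i.1 ω) = c} := by
      ext ω; simp only [Set.mem_inter_iff, Set.mem_setOf_eq]
    rw [e1, e3, e4] at h1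
    exact h1

end MBAux

/-- For a strictly positive distribution on discrete random variables
X_1,…,X_d satisfying the intersection property of conditional independence, the
intersection of two Markov blankets of X_k relative to S is again a Markov blanket. -/
theorem markov_blankets_closed_under_intersection
    {Ω β : Type*} [Fintype Ω] {d : ℕ}
    (p : Ω → ℝ) (hsum : ∑ ω, p ω = 1)
    (X : Fin d → Ω → β)
    (hpos : ∀ v : Fin d → β, 0 < prE p {ω | ∀ i, X i ω = v i})
    (hInter : ∀ (k : Fin d) (A B C : Finset (Fin d)),
      Disjoint A B → Disjoint A C → Disjoint B C →
      CondIndepRV p (X k) (fun ω => fun i : ↥A => X i.1 ω)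
        (fun ω => fun i : ↥(B ∪ C) => X i.1 ω) →
      CondIndepRV p (X k) (fun ω => fun i : ↥B => X i.1 ω)
        (fun ω => fun i : ↥(A ∪ C) => X i.1 ω) →
      CondIndepRV p (X k) (fun ω => fun i : ↥(A ∪ B) => X i.1 ω)
        (fun ω => fun i : ↥C => X i.1 ω))
    (k : Fin d) (S m₁ m₂ : Finset (Fin d))
    (h₁ : m₁ ⊆ S ∧ CondIndepRV p (X k)
      (fun ω => fun i : ↥(S \ m₁) => X i.1 ω) (fun ω => fun i : ↥m₁ => X i.1 ω))
    (h₂ : m₂ ⊆ S ∧ CondIndepRV p (X k)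
      (fun ω => fun i : ↥(S \ m₂) => X i.1 ω) (fun ω => fun i : ↥m₂ => X i.1 ω)) :
    m₁ ∩ m₂ ⊆ S ∧ CondIndepRV p (X k)
      (fun ω => fun i : ↥(S \ (m₁ ∩ m₂)) => X i.1 ω)
      (fun ω => fun i : ↥(m₁ ∩ m₂) => X i.1 ω) := by
  classical
  have hOmega : Nonempty Ω := by
    by_contra hc
    rw [not_nonempty_iff] at hc
    rw [Finset.univ_eq_empty, Finset.sum_empty] at hsum
    norm_num at hsum
  haveI hβ : Nonempty β := ⟨X k (Classical.arbitrary Ω)⟩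
  obtain ⟨hm₁S, hci1⟩ := h₁
  obtain ⟨hm₂S, hci2⟩ := h₂
  refine ⟨fun i hi => hm₁S (Finset.mem_inter.mp hi).1, ?_⟩
  set R := S \ (m₁ ∪ m₂) with hR
  set A₁ := m₁ \ m₂ with hA₁
  set A₂ := m₂ \ m₁ with hA₂
  set Cc := m₁ ∩ m₂ with hCc
  have f1 : S \ m₁ = R ∪ A₂ := by
    ext i
    have hiS : i ∈ m₂ → i ∈ S := fun h => hm₂S h
    simp only [hR, hA₂, Finset.mem_sdiff, Finset.mem_union]
    tauto
  have f2 : S \ m₂ = R ∪ A₁ := by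
    ext i
    have hiS : i ∈ m₁ → i ∈ S := fun h => hm₁S h
    simp only [hR, hA₁, Finset.mem_sdiff, Finset.mem_union]
    tauto
  have f3 : m₁ = A₁ ∪ Cc := by
    ext i
    simp only [hA₁, hCc, Finset.mem_sdiff, Finset.mem_union, Finset.mem_inter]
    tauto
  have f4 : m₂ = A₂ ∪ Cc := by
    ext i
    simp only [hA₂, hCc, Finset.mem_sdiff, Finset.mem_union, Finset.mem_inter]
    tauto
  have f5 : S \ Cc = (R ∪ A₁) ∪ A₂ := by
    ext i
    have hiS1 : i ∈ m₁ → i ∈ S := fun h => hm₁S h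
    have hiS2 : i ∈ m₂ → i ∈ S := fun h => hm₂S h
    simp only [hR, hA₁, hA₂, hCc, Finset.mem_sdiff, Finset.mem_union, Finset.mem_inter]
    tauto
  have dRA1 : Disjoint R A₁ := by
    rw [Finset.disjoint_left]
    intro i hi hj
    simp only [hR, hA₁, Finset.mem_sdiff, Finset.mem_union] at hi hj
    tauto
  have dRA2 : Disjoint R A₂ := by
    rw [Finset.disjoint_left]
    intro i hi hj
    simp only [hR, hA₂, Finset.mem_sdiff, Finset.mem_union] at hi hj
    tauto
  have dRC : Disjoint R Cc := by
    rw [Finset.disjoint_left]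
    intro i hi hj
    simp only [hR, hCc, Finset.mem_sdiff, Finset.mem_union, Finset.mem_inter] at hi hj
    tauto
  have d12 : Disjoint A₁ A₂ := by
    rw [Finset.disjoint_left]
    intro i hi hj
    simp only [hA₁, hA₂, Finset.mem_sdiff] at hi hj
    tauto
  have d1C : Disjoint A₁ Cc := by
    rw [Finset.disjoint_left]
    intro i hi hj
    simp only [hA₁, hCc, Finset.mem_sdiff, Finset.mem_inter] at hi hj
    tauto
  have d2C : Disjoint A₂ Cc := by
    rw [Finset.disjoint_left]
    intro i hi hj
    simp only [hA₂, hCc, Finset.mem_sdiff, Finset.mem_inter] at hi hj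
    tauto
  have dA_B : Disjoint (R ∪ A₁) A₂ := Finset.disjoint_union_left.mpr ⟨dRA2, d12⟩
  have dA_C : Disjoint (R ∪ A₁) Cc := Finset.disjoint_union_left.mpr ⟨dRC, d1C⟩
  have dch1 : Disjoint (R ∪ A₁) (A₂ ∪ Cc) := Finset.disjoint_union_right.mpr ⟨dA_B, dA_C⟩
  have dch2 : Disjoint A₂ ((R ∪ A₁) ∪ Cc) := Finset.disjoint_union_right.mpr ⟨dA_B.symm, d2C⟩
  have dconc : Disjoint ((R ∪ A₁) ∪ A₂) Cc := Finset.disjoint_union_left.mpr ⟨dA_C, d2C⟩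
  have ci1 : MBAux.CI p X k (S \ m₁) m₁ :=
    (MBAux.CI_iff p X Finset.sdiff_disjoint).mp hci1
  have ci2 : MBAux.CI p X k (S \ m₂) m₂ :=
    (MBAux.CI_iff p X Finset.sdiff_disjoint).mp hci2
  rw [f1, f3] at ci1
  rw [f2, f4] at ci2
  rw [Finset.union_comm R A₂] at ci1
  have wu : MBAux.CI p X k A₂ (R ∪ (A₁ ∪ Cc)) :=
    MBAux.CI_weakUnion p X hpos dRA2.symm
      (Finset.disjoint_union_right.mpr ⟨d12.symm, d2C⟩) ci1
  rw [← Finset.union_assoc] at wu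
  have hint := hInter k (R ∪ A₁) A₂ Cc dA_B dA_C d2C
    ((MBAux.CI_iff p X dch1).mpr ci2)
    ((MBAux.CI_iff p X dch2).mpr wu)
  have ci3 : MBAux.CI p X k ((R ∪ A₁) ∪ A₂) Cc :=
    (MBAux.CI_iff p X dconc).mp hint
  rw [← f5] at ci3
  exact (MBAux.CI_iff p X Finset.sdiff_disjoint).mpr ci3


end
end

section
/- Let G be a minimal I-map of a strictly positive distribution P on {0,1}^d. Then for every node X_k and every ancestral set A of G with pa(k) \ A ≠ ∅, the conditional mutual information satisfies I(X_k; pa(k) | A) > 0. -/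
open scoped Classical BigOperators
open Finset

noncomputable section

/-- Shannon entropy of a finitely-supported random variable. -/
def entH {Ω α : Type*} [Fintype Ω] [Fintype α] (p : Ω → ℝ) (X : Ω → α) : ℝ :=
  -∑ a : α, prE p {ω | X ω = a} * Real.log (prE p {ω | X ω = a})

/-- Conditional entropy H(X | Y). -/
def condEnt {Ω α β : Type*} [Fintype Ω] [Fintype α] [Fintype β]
    (p : Ω → ℝ) (X : Ω → α) (Y : Ω → β) : ℝ :=
  entH p (fun ω => (X ω, Y ω)) - entH p Y

/-- Mutual information I(X;Y). -/
def mutInfo {Ω α β : Type*} [Fintype Ω] [Fintype α] [Fintype β]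
    (p : Ω → ℝ) (X : Ω → α) (Y : Ω → β) : ℝ :=
  entH p X + entH p Y - entH p (fun ω => (X ω, Y ω))

/-- Conditional mutual information I(X;Y | Z). -/
def condMI {Ω α β γ : Type*} [Fintype Ω] [Fintype α] [Fintype β] [Fintype γ]
    (p : Ω → ℝ) (X : Ω → α) (Y : Ω → β) (Z : Ω → γ) : ℝ :=
  entH p (fun ω => (X ω, Z ω)) + entH p (fun ω => (Y ω, Z ω)) -
    entH p (fun ω => (X ω, Y ω, Z ω)) - entH p Z

/-- The parent set of `k` in the directed graph `E`. -/
def paF {d : ℕ} (E : Fin d → Fin d → Prop) (k : Fin d) : Finset (Fin d) :=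
  Finset.univ.filter (fun i => E i k)

/-- The restriction of a configuration to a subset of coordinates, as a random variable. -/
def restr {d : ℕ} {β : Type*} (s : Finset (Fin d)) : (Fin d → β) → (↥s → β) :=
  fun x i => x i.1

/-- `P` factorizes over the DAG with edge relation `E`:
there are nonnegative Markov kernels, each depending only on the parent coordinates,
whose product is `p`. -/
def Factorizes {d : ℕ} {β : Type*} [Fintype β] (E : Fin d → Fin d → Prop)
    (p : (Fin d → β) → ℝ) : Prop :=
  ∃ f : Fin d → β → (Fin d → β) → ℝ,
    (∀ k b x, 0 ≤ f k b x) ∧ (∀ k x, ∑ b, f k b x = 1) ∧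
    (∀ k b x y, (∀ j, E j k → x j = y j) → f k b x = f k b y) ∧
    (∀ x, p x = ∏ k, f k (x k) x)

/-- Ancestral sets of the layer decomposition: `Aset E j` is the union of the first `j`
layers, i.e. `Aset E (j+1)` consists of all nodes whose parents all lie in `Aset E j`. -/
def Aset {d : ℕ} (E : Fin d → Fin d → Prop) : ℕ → Finset (Fin d)
  | 0 => ∅
  | (j+1) => Finset.univ.filter (fun k => ∀ i, E i k → i ∈ Aset E j)

/-!
If `I(X_k; pa(k) | A) ≤ 0`, Gibbs' inequality forces `X_k ⊥ X_{pa(k)} | X_A`. On the other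
hand, for a factorization `P = ∏ f_j` over the DAG, the kernel `f_k(a, ·)` is the conditional
law of `X_k` given `X_U` for every `U` with `pa(k) ⊆ U ⊆ nd(k)` (the non-descendants of `k`);
take `U = pa(k) ∪ A`. Combined with the conditional independence, `f_k(a, ·)` is the
conditional law of `X_k` given `X_A`, so it only depends on the coordinates in `pa(k) ∩ A`.
Then the same kernels factorize `P` over the graph without the edge `i → k` for
`i ∈ pa(k) \ A`, contradicting minimality.
-/

section Probability

variable {Ω : Type*} [Fintype Ω] (p : Ω → ℝ)

lemma prE_nonneg (hp : ∀ ω, 0 ≤ p ω) (s : Set Ω) : 0 ≤ prE p s :=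
  Finset.sum_nonneg fun ω _ => by split_ifs <;> simp [hp ω]

lemma prE_mono (hp : ∀ ω, 0 ≤ p ω) {s t : Set Ω} (hst : s ⊆ t) : prE p s ≤ prE p t :=
  Finset.sum_le_sum fun ω _ => by
    by_cases hs : ω ∈ s
    · simp [hs, hst hs]
    · split_ifs <;> simp [hp ω]

lemma le_prE_of_mem (hp : ∀ ω, 0 ≤ p ω) {s : Set Ω} {ω : Ω} (hω : ω ∈ s) :
    p ω ≤ prE p s := by
  unfold prE
  simpa [hω] using Finset.single_le_sum (f := fun ω => if ω ∈ s then p ω else 0)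
    (fun ω _ => by split_ifs <;> simp [hp ω]) (Finset.mem_univ ω)

lemma prE_singleton (ω : Ω) : prE p {ω} = p ω := by
  simp [prE]

lemma sum_prE_mul {δ : Type*} [Fintype δ] (W : Ω → δ) (φ : δ → ℝ) :
    ∑ a, prE p {ω | W ω = a} * φ a = ∑ ω, p ω * φ (W ω) := by
  simp only [prE, Finset.sum_mul, Set.mem_ofPred_eq, ite_mul, zero_mul]
  rw [Finset.sum_comm]
  simp

lemma sum_prE_and {α : Type*} [Fintype α] (X : Ω → α) (R : Ω → Prop) :
    ∑ a, prE p {ω | X ω = a ∧ R ω} = prE p {ω | R ω} := by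
  simp only [prE, Set.mem_ofPred_eq]
  rw [Finset.sum_comm]
  refine Finset.sum_congr rfl fun ω _ => ?_
  by_cases hω : R ω <;> simp [hω]

end Probability

theorem eq_of_sum_mul_log_div_nonpos {ι : Type*} [Fintype ι] {P Q : ι → ℝ}
    (hP : ∀ i, 0 ≤ P i) (hQ : ∀ i, 0 ≤ Q i) (hPQ : ∀ i, Q i = 0 → P i = 0)
    (hsum : ∑ i, P i = ∑ i, Q i) (h : ∑ i, P i * Real.log (P i / Q i) ≤ 0) : P = Q := by
  open InformationTheory in
  -- each term `Q * klFun (P / Q)` is nonnegative and vanishes only where `P = Q`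
  have hterm : ∀ i, Q i * klFun (P i / Q i) = P i * Real.log (P i / Q i) + Q i - P i := by
    intro i
    by_cases hQi : Q i = 0
    · simp [hQi, hPQ i hQi]
    · rw [klFun_apply]
      field_simp
  have hnonneg : ∀ i, 0 ≤ Q i * klFun (P i / Q i) :=
    fun i => mul_nonneg (hQ i) (klFun_nonneg (div_nonneg (hP i) (hQ i)))
  have htotal : ∑ i, Q i * klFun (P i / Q i) = ∑ i, P i * Real.log (P i / Q i) := by
    simp only [hterm, Finset.sum_sub_distrib, Finset.sum_add_distrib, hsum, add_sub_cancel_right]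
  have hzero := (Finset.sum_eq_zero_iff_of_nonneg fun i _ => hnonneg i).1
    (le_antisymm (htotal ▸ h) (Finset.sum_nonneg fun i _ => hnonneg i))
  funext i
  by_cases hQi : Q i = 0
  · rw [hQi, hPQ i hQi]
  · have := (mul_eq_zero.1 (hzero i (Finset.mem_univ i))).resolve_left hQi
    rwa [klFun_eq_zero_iff (div_nonneg (hP i) (hQ i)), div_eq_one_iff_eq hQi] at this

section ConditionalMutualInformation

variable {Ω α β γ : Type*} [Fintype Ω] [Fintype α] [Fintype β] [Fintype γ]
  (p : Ω → ℝ) (X : Ω → α) (Y : Ω → β) (Z : Ω → γ)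

lemma entH_eq_sum (W : Ω → α) :
    entH p W = -∑ ω, p ω * Real.log (prE p {ω' | W ω' = W ω}) := by
  rw [entH, sum_prE_mul p W fun a => Real.log (prE p {ω | W ω = a})]

lemma condMI_eq_sum_mul_log_div (hp : ∀ ω, 0 ≤ p ω) :
    condMI p X Y Z =
      ∑ t : α × β × γ, prE p {ω | X ω = t.1 ∧ Y ω = t.2.1 ∧ Z ω = t.2.2} *
        Real.log (prE p {ω | X ω = t.1 ∧ Y ω = t.2.1 ∧ Z ω = t.2.2}
          / (prE p {ω | X ω = t.1 ∧ Z ω = t.2.2} * prE p {ω | Y ω = t.2.1 ∧ Z ω = t.2.2}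
            / prE p {ω | Z ω = t.2.2})) := by
  have hsets : ∀ t : α × β × γ,
      {ω | X ω = t.1 ∧ Y ω = t.2.1 ∧ Z ω = t.2.2} = {ω | (X ω, Y ω, Z ω) = t} :=
    fun t => by ext ω; simp [Prod.ext_iff]
  simp only [hsets]
  rw [sum_prE_mul p (fun ω => (X ω, Y ω, Z ω)), condMI, entH_eq_sum, entH_eq_sum, entH_eq_sum,
    entH_eq_sum]
  simp only [Prod.mk.injEq, ← Finset.sum_neg_distrib, ← Finset.sum_add_distrib,
    ← Finset.sum_sub_distrib]
  refine Finset.sum_congr rfl fun ω _ => ?_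
  rcases (hp ω).eq_or_lt with hω | hω
  · simp [← hω]
  have hne : ∀ {s : Set Ω}, ω ∈ s → prE p s ≠ 0 :=
    fun hs => (hω.trans_le (le_prE_of_mem p hp hs)).ne'
  have hXZ := hne (s := {ω' | X ω' = X ω ∧ Z ω' = Z ω}) ⟨rfl, rfl⟩
  have hYZ := hne (s := {ω' | Y ω' = Y ω ∧ Z ω' = Z ω}) ⟨rfl, rfl⟩
  have hZ := hne (s := {ω' | Z ω' = Z ω}) rfl
  have hXYZ := hne (s := {ω' | X ω' = X ω ∧ Y ω' = Y ω ∧ Z ω' = Z ω}) ⟨rfl, rfl, rfl⟩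
  rw [Real.log_div hXYZ (div_ne_zero (mul_ne_zero hXZ hYZ) hZ),
    Real.log_div (mul_ne_zero hXZ hYZ) hZ, Real.log_mul hXZ hYZ]
  ring

lemma sum_prE_and_and :
    ∑ t : α × β × γ, prE p {ω | X ω = t.1 ∧ Y ω = t.2.1 ∧ Z ω = t.2.2}
      = ∑ c, prE p {ω | Z ω = c} := by
  rw [Fintype.sum_prod_type, Finset.sum_comm, Fintype.sum_prod_type]
  simp only [sum_prE_and]
  rw [Finset.sum_comm]
  simp only [sum_prE_and]

lemma sum_prE_mul_prE_div_prE :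
    ∑ t : α × β × γ, prE p {ω | X ω = t.1 ∧ Z ω = t.2.2} *
      prE p {ω | Y ω = t.2.1 ∧ Z ω = t.2.2} / prE p {ω | Z ω = t.2.2}
      = ∑ c, prE p {ω | Z ω = c} := by
  simp only [Fintype.sum_prod_type]
  rw [Finset.sum_comm]
  simp only [Finset.sum_comm (γ := β), ← Finset.sum_div, ← Finset.mul_sum, sum_prE_and]
  rw [Finset.sum_comm]
  refine Finset.sum_congr rfl fun c _ => ?_
  by_cases hc : prE p {ω | Z ω = c} = 0
  · simp [hc]
  · simp only [mul_div_cancel_right₀ _ hc, sum_prE_and]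

theorem condIndepRV_of_condMI_nonpos (hp : ∀ ω, 0 ≤ p ω) (h : condMI p X Y Z ≤ 0) :
    CondIndepRV p X Y Z := by
  have hnonneg := prE_nonneg p hp
  have hzero {s t : Set Ω} (ht : prE p t = 0) (hst : s ⊆ t) : prE p s = 0 :=
    le_antisymm (ht ▸ prE_mono p hp hst) (hnonneg s)
  have hPQ := eq_of_sum_mul_log_div_nonpos
    (P := fun t : α × β × γ => prE p {ω | X ω = t.1 ∧ Y ω = t.2.1 ∧ Z ω = t.2.2})
    (Q := fun t => prE p {ω | X ω = t.1 ∧ Z ω = t.2.2} *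
      prE p {ω | Y ω = t.2.1 ∧ Z ω = t.2.2} / prE p {ω | Z ω = t.2.2})
    (fun t => hnonneg _) (fun t => div_nonneg (mul_nonneg (hnonneg _) (hnonneg _)) (hnonneg _))
    (fun t ht => by
      rcases div_eq_zero_iff.1 ht with ht | ht
      · rcases mul_eq_zero.1 ht with ht | ht
        · exact hzero ht fun ω hω => ⟨hω.1, hω.2.2⟩
        · exact hzero ht fun ω hω => hω.2
      · exact hzero ht fun ω hω => hω.2.2)
    ((sum_prE_and_and p X Y Z).trans (sum_prE_mul_prE_div_prE p X Y Z).symm)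
    (condMI_eq_sum_mul_log_div p X Y Z hp ▸ h)
  intro a b c
  by_cases hc : prE p {ω | Z ω = c} = 0
  · rw [hc, hzero (s := {ω | X ω = a ∧ Z ω = c}) hc fun ω hω => hω.2, mul_zero, zero_mul]
  · rw [congrFun hPQ (a, b, c), div_mul_cancel₀ _ hc]

end ConditionalMutualInformation

section Graph

variable {d : ℕ} {β : Type*} {E : Fin d → Fin d → Prop}

def cylinder (T : Finset (Fin d)) (x : Fin d → β) : Set (Fin d → β) :=
  {y | ∀ j ∈ T, y j = x j}

lemma mem_cylinder_self (T : Finset (Fin d)) (x : Fin d → β) : x ∈ cylinder T x :=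
  fun _ _ => rfl

lemma cylinder_union (S T : Finset (Fin d)) (x : Fin d → β) :
    cylinder (S ∪ T) x = cylinder S x ∩ cylinder T x := by
  ext y
  simp [cylinder, or_imp, forall_and]

lemma cylinder_univ (x : Fin d → β) : cylinder univ x = {x} := by
  ext y
  simp [cylinder, funext_iff]

lemma mem_cylinder_insert {T : Finset (Fin d)} {m : Fin d} (hm : m ∉ T) {x y : Fin d → β}
    {b : β} :
    y ∈ cylinder (insert m T) (Function.update x m b) ↔ y m = b ∧ y ∈ cylinder T x := by
  simp only [cylinder, Set.mem_ofPred_eq, Finset.forall_mem_insert, Function.update_self]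
  refine and_congr_right fun _ => forall₂_congr fun j hj => ?_
  rw [Function.update_of_ne (ne_of_mem_of_not_mem hj hm)]

lemma cylinder_insert {T : Finset (Fin d)} {m : Fin d} (hm : m ∉ T) (x : Fin d → β) (b : β) :
    cylinder (insert m T) (Function.update x m b) = {y | y m = b ∧ y ∈ cylinder T x} :=
  Set.ext fun _ => mem_cylinder_insert hm

lemma restr_eq_restr_iff {T : Finset (Fin d)} {x y : Fin d → β} :
    restr T y = restr T x ↔ y ∈ cylinder T x := by
  simp [restr, cylinder, funext_iff]

def IsAncestral (E : Fin d → Fin d → Prop) (T : Finset (Fin d)) : Prop :=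
  ∀ i j, E i j → j ∈ T → i ∈ T

lemma IsAncestral.insert {T : Finset (Fin d)} (hT : IsAncestral E T) {m : Fin d}
    (hm : ∀ i, E i m → i ∈ T) : IsAncestral E (insert m T) := by
  intro i j hij hj
  rcases Finset.mem_insert.1 hj with rfl | hj
  · exact Finset.mem_insert_of_mem (hm i hij)
  · exact Finset.mem_insert_of_mem (hT i j hij hj)

lemma IsAncestral.mem_of_reflTransGen {T : Finset (Fin d)} (hT : IsAncestral E T) {i j : Fin d}
    (hij : Relation.ReflTransGen E i j) (hj : j ∈ T) : i ∈ T := by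
  induction hij using Relation.ReflTransGen.head_induction_on with
  | refl => exact hj
  | head hij _ ih => exact hT _ _ hij ih

lemma exists_parents_subset_of_ne_univ (hacyc : ∀ i, ¬ Relation.TransGen E i i)
    {T : Finset (Fin d)} (hT : T ≠ univ) : ∃ m ∉ T, ∀ i, E i m → i ∈ T := by
  have : IsStrictOrder (Fin d) (Relation.TransGen E) :=
    { irrefl := hacyc, trans := fun _ _ _ => Relation.TransGen.trans }
  have hwf : WellFounded E :=
    Subrelation.wf Relation.TransGen.single (Finite.wellFounded_of_trans_of_irrefl _)
  obtain ⟨m₀, hm₀⟩ : ∃ m, m ∉ T := by simpa [Finset.eq_univ_iff_forall] using hT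
  obtain ⟨m, hm, hmin⟩ := hwf.has_min {m | m ∉ T} ⟨m₀, hm₀⟩
  exact ⟨m, hm, fun i hi => by_contra fun hiT => hmin i hiT hi⟩

def nonDesc (E : Fin d → Fin d → Prop) (k : Fin d) : Finset (Fin d) :=
  univ.filter fun j => ¬ Relation.ReflTransGen E k j

lemma isAncestral_nonDesc (k : Fin d) : IsAncestral E (nonDesc E k) := by
  intro i j hij hj
  simp only [nonDesc, Finset.mem_filter, Finset.mem_univ, true_and] at hj ⊢
  exact fun hki => hj (hki.tail hij)

lemma self_notMem_nonDesc (k : Fin d) : k ∉ nonDesc E k := by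
  simpa [nonDesc] using Relation.ReflTransGen.refl

lemma mem_nonDesc_of_parent (hacyc : ∀ i, ¬ Relation.TransGen E i i) {j k : Fin d} (h : E j k) :
    j ∈ nonDesc E k := by
  simp only [nonDesc, Finset.mem_filter, Finset.mem_univ, true_and]
  exact fun hkj => hacyc k (Relation.TransGen.tail' hkj h)

lemma IsAncestral.subset_nonDesc {A : Finset (Fin d)} (hA : IsAncestral E A) {k : Fin d}
    (hkA : k ∉ A) : A ⊆ nonDesc E k := by
  intro j hj
  simp only [nonDesc, Finset.mem_filter, Finset.mem_univ, true_and]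
  exact fun hkj => hkA (hA.mem_of_reflTransGen hkj hj)

structure IsKernelFactorization [Fintype β] (E : Fin d → Fin d → Prop)
    (p : (Fin d → β) → ℝ) (f : Fin d → β → (Fin d → β) → ℝ) : Prop where
  nonneg : ∀ k b x, 0 ≤ f k b x
  sum_eq_one : ∀ k x, ∑ b, f k b x = 1
  congr : ∀ k b x y, (∀ j, E j k → x j = y j) → f k b x = f k b y
  eq_prod : ∀ x, p x = ∏ k, f k (x k) x

end Graph

namespace IsKernelFactorization

variable {d : ℕ} {β : Type*} [Fintype β] {E : Fin d → Fin d → Prop}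
  {p : (Fin d → β) → ℝ} {f : Fin d → β → (Fin d → β) → ℝ}

lemma apply_update (hf : IsKernelFactorization E p f) {k m : Fin d} (hm : ¬ E m k) (b : β)
    (x : Fin d → β) (c : β) : f k b (Function.update x m c) = f k b x :=
  hf.congr k b _ _ fun j hj => Function.update_of_ne (by rintro rfl; exact hm hj) _ _

lemma prod_update (hf : IsKernelFactorization E p f) {T : Finset (Fin d)} (hT : IsAncestral E T)
    {m : Fin d} (hm : m ∉ T) (x : Fin d → β) (c : β) :
    ∏ j ∈ T, f j (Function.update x m c j) (Function.update x m c) = ∏ j ∈ T, f j (x j) x :=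
  Finset.prod_congr rfl fun j hj => by
    rw [Function.update_of_ne (ne_of_mem_of_not_mem hj hm),
      hf.apply_update (fun h => hm (hT m j h hj))]

theorem prE_cylinder (hf : IsKernelFactorization E p f) (hacyc : ∀ i, ¬ Relation.TransGen E i i)
    {T : Finset (Fin d)} (hT : IsAncestral E T) (x : Fin d → β) :
    prE p (cylinder T x) = ∏ j ∈ T, f j (x j) x := by
  induction T using WellFoundedGT.induction generalizing x with
  | _ T ih =>
  by_cases hTu : T = univ
  · subst hTu
    rw [cylinder_univ, prE_singleton, hf.eq_prod]
  obtain ⟨m, hm, hpa⟩ := exists_parents_subset_of_ne_univ hacyc hTu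
  rw [← Set.ofPred_mem_eq (s := cylinder T x), ← sum_prE_and p (fun y => y m)]
  simp_rw [← mem_cylinder_insert hm, Set.ofPred_mem_eq,
    ih _ (Finset.ssubset_insert hm) (hT.insert hpa), Finset.prod_insert hm,
    Function.update_self, hf.prod_update hT hm, hf.apply_update (fun h => hm (hpa m h)),
    ← Finset.sum_mul, hf.sum_eq_one, one_mul]

theorem prE_eval_and_cylinder_of_isAncestral (hf : IsKernelFactorization E p f)
    (hacyc : ∀ i, ¬ Relation.TransGen E i i) {T : Finset (Fin d)} (hT : IsAncestral E T)
    {k : Fin d} (hk : k ∉ T) (hpa : ∀ j, E j k → j ∈ T) (a : β) (x : Fin d → β) :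
    prE p {y | y k = a ∧ y ∈ cylinder T x} = f k a x * prE p (cylinder T x) := by
  simp_rw [← mem_cylinder_insert hk, Set.ofPred_mem_eq, hf.prE_cylinder hacyc (hT.insert hpa),
    hf.prE_cylinder hacyc hT, Finset.prod_insert hk, Function.update_self, hf.prod_update hT hk,
    hf.apply_update (fun h => hk (hpa k h))]

theorem prE_eval_and_cylinder (hf : IsKernelFactorization E p f)
    (hacyc : ∀ i, ¬ Relation.TransGen E i i) {T : Finset (Fin d)} (hT : IsAncestral E T)
    {k : Fin d} (hk : k ∉ T) {U : Finset (Fin d)} (hpaU : ∀ j, E j k → j ∈ U)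
    (hUT : U ⊆ T) (a : β) (x : Fin d → β) :
    prE p {y | y k = a ∧ y ∈ cylinder U x} = f k a x * prE p (cylinder U x) := by
  -- downward induction on `U`, splitting along a coordinate `m ∈ T \ U`, not a parent of `k`
  induction U using WellFoundedGT.induction generalizing x with
  | _ U ih =>
  rcases hUT.eq_or_ssubset with rfl | hUT'
  · exact hf.prE_eval_and_cylinder_of_isAncestral hacyc hT hk hpaU a x
  obtain ⟨m, hmT, hmU⟩ := Finset.exists_of_ssubset hUT'
  rw [← sum_prE_and p (fun y => y m), ← Set.ofPred_mem_eq (s := cylinder U x),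
    ← sum_prE_and p (fun y => y m), Finset.mul_sum]
  refine Finset.sum_congr rfl fun b _ => ?_
  have hpaU' : ∀ j, E j k → j ∈ insert m U := fun j hj => Finset.mem_insert_of_mem (hpaU j hj)
  have := ih _ (Finset.ssubset_insert hmU) hpaU' (Finset.insert_subset hmT hUT)
    (Function.update x m b)
  simp only [cylinder_insert hmU, hf.apply_update (fun h => hmU (hpaU m h)),
    Set.mem_ofPred_eq] at this
  simpa only [Set.ofPred_mem_eq, and_left_comm (a := _ = b)] using this

theorem apply_congr_of_condIndepRV (hf : IsKernelFactorization E p f) (hpos : ∀ x, 0 < p x)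
    (hacyc : ∀ i, ¬ Relation.TransGen E i i) {k : Fin d} {A : Finset (Fin d)}
    (hA : IsAncestral E A) (hkA : k ∉ A)
    (hCI : CondIndepRV p (fun x => x k) (restr (β := β) (paF E k)) (restr A)) (a : β)
    {x y : Fin d → β} (hxy : ∀ j ∈ paF E k ∩ A, x j = y j) : f k a x = f k a y := by
  have hcyl_pos (T : Finset (Fin d)) (z : Fin d → β) : 0 < prE p (cylinder T z) :=
    (hpos z).trans_le (le_prE_of_mem p (fun x => (hpos x).le) (mem_cylinder_self T z))
  have hpa_mem (j : Fin d) : j ∈ paF E k ↔ E j k := by simp [paF]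
  -- `f k a z = P(X_k = a | X_A = z_A)`
  have hkernel (z : Fin d → β) :
      f k a z * prE p (cylinder A z) = prE p ({w | w k = a} ∩ cylinder A z) := by
    have hci := hCI a (restr (paF E k) z) (restr A z)
    have hmarkov := hf.prE_eval_and_cylinder hacyc (isAncestral_nonDesc k) (self_notMem_nonDesc k)
      (U := paF E k ∪ A) (fun j hj => Finset.mem_union_left _ ((hpa_mem j).2 hj))
      (Finset.union_subset (fun j hj => mem_nonDesc_of_parent hacyc ((hpa_mem j).1 hj))
        (hA.subset_nonDesc hkA)) a z
    simp only [restr_eq_restr_iff, cylinder_union, Set.ofPred_and, Set.ofPred_mem_eq] at hci hmarkov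
    refine mul_right_cancel₀ (hcyl_pos (paF E k ∪ A) z).ne' ?_
    rw [cylinder_union]
    linear_combination hci - prE p (cylinder A z) * hmarkov
  have hzA : cylinder A ((paF E k).piecewise x y) = cylinder A y := by
    ext w
    refine forall₂_congr fun j hj => ?_
    by_cases hjpa : j ∈ paF E k
    · rw [Finset.piecewise_eq_of_mem _ _ _ hjpa, hxy j (Finset.mem_inter.2 ⟨hjpa, hj⟩)]
    · rw [Finset.piecewise_eq_of_notMem _ _ _ hjpa]
  calc f k a x = f k a ((paF E k).piecewise x y) :=
        hf.congr k a _ _ fun j hj => (Finset.piecewise_eq_of_mem _ _ _ ((hpa_mem j).2 hj)).symm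
    _ = f k a y := by
      refine mul_right_cancel₀ (hcyl_pos A y).ne' ?_
      rw [hkernel y, ← hzA, hkernel]

theorem factorizes_erase_edge (hf : IsKernelFactorization E p f) {i k : Fin d}
    (hk : ∀ b x y, (∀ j, E j k → j ≠ i → x j = y j) → f k b x = f k b y) :
    Factorizes (fun a b => E a b ∧ ¬(a = i ∧ b = k)) p := by
  refine ⟨f, hf.nonneg, hf.sum_eq_one, fun j b x y hxy => ?_, hf.eq_prod⟩
  by_cases hj : j = k
  · subst hj
    exact hk b x y fun l hl hli => hxy l ⟨hl, fun h => hli h.1⟩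
  · exact hf.congr j b x y fun l hl => hxy l ⟨hl, fun h => hj h.2⟩

end IsKernelFactorization

theorem minimal_imap_parent_condMI_pos_general
    {d : ℕ} (p : (Fin d → Bool) → ℝ)
    (hpos : ∀ x, 0 < p x)
    (E : Fin d → Fin d → Prop) (hacyc : ∀ i, ¬ Relation.TransGen E i i)
    (hfact : Factorizes E p)
    (hmin : ∀ i k, E i k → ¬ Factorizes (fun a b => E a b ∧ ¬(a = i ∧ b = k)) p)
    (k : Fin d) (A : Finset (Fin d))
    (hanc : ∀ i j, E i j → j ∈ A → i ∈ A)
    (hpa : ∃ i, E i k ∧ i ∉ A) :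
    0 < condMI p (fun x => x k) (restr (β := Bool) (paF E k)) (restr A) := by
  by_contra hle
  obtain ⟨i, hik, hiA⟩ := hpa
  obtain ⟨f, hf₀, hf₁, hf₂, hf₃⟩ := hfact
  have hf : IsKernelFactorization E p f := ⟨hf₀, hf₁, hf₂, hf₃⟩
  have hCI := condIndepRV_of_condMI_nonpos p _ _ _ (fun x => (hpos x).le) (not_lt.1 hle)
  refine hmin i k hik (hf.factorizes_erase_edge fun b x y hxy => ?_)
  refine hf.apply_congr_of_condIndepRV hpos hacyc hanc (fun hk => hiA (hanc i k hik hk)) hCI b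
    fun j hj => ?_
  rw [Finset.mem_inter] at hj
  exact hxy j (by simpa [paF] using hj.1) (ne_of_mem_of_not_mem hj.2 hiA)

/-- If `G` (edge relation `E`) is a minimal I-map of a strictly
positive distribution on `{0,1}^d`, then for every node `k` and every ancestral set
`A` with `pa(k) \ A ≠ ∅`, we have I(X_k; pa(k) | A) > 0. -/
theorem minimal_imap_parent_condMI_pos
    {d : ℕ} (p : (Fin d → Bool) → ℝ)
    (hpos : ∀ x, 0 < p x) (hsum : ∑ x, p x = 1)
    (E : Fin d → Fin d → Prop) (hacyc : ∀ i, ¬ Relation.TransGen E i i)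
    (hfact : Factorizes E p)
    (hmin : ∀ i k, E i k → ¬ Factorizes (fun a b => E a b ∧ ¬(a = i ∧ b = k)) p)
    (k : Fin d) (A : Finset (Fin d))
    (hanc : ∀ i j, E i j → j ∈ A → i ∈ A)
    (hpa : ∃ i, E i k ∧ i ∉ A) :
    0 < condMI p (fun x => x k) (restr (β := Bool) (paF E k)) (restr A) :=
  minimal_imap_parent_condMI_pos_general p hpos E hacyc hfact hmin k A hanc hpa
end
end

section
/- Let X_k be a node of a polyforest G (a DAG whose undirected skeleton is acyclic) over which the strictly positive distribution P factorizes, let A_j be an ancestral set given by the first j layers, and let m_jk = MB(X_k; A_j) be the Markov boundary of X_k in A_j. Then every X_c ∈ m_jk has a directed path in G from X_c to X_k. -/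
open scoped Classical BigOperators
open Finset

noncomputable section

namespace PFAux
variable {d : ℕ}

/-- Configurations pinned to `z` outside `S` (free on `S`). -/
def Pin (S : Finset (Fin d)) (z : Fin d → Bool) : Finset (Fin d → Bool) :=
  Finset.univ.filter (fun x => ∀ i, i ∉ S → x i = z i)

lemma mem_Pin {S : Finset (Fin d)} {z x : Fin d → Bool} :
    x ∈ Pin S z ↔ ∀ i, i ∉ S → x i = z i := by
  simp [Pin]

lemma Pin_empty (z : Fin d → Bool) : Pin (∅ : Finset (Fin d)) z = {z} := by
  ext x
  simp only [mem_Pin, Finset.mem_singleton, Finset.notMem_empty, not_false_iff,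
    forall_true_left, funext_iff]

def patch (S : Finset (Fin d)) (z u : Fin d → Bool) : Fin d → Bool :=
  fun i => if i ∈ S then u i else z i

lemma patch_mem_Pin (S : Finset (Fin d)) (z u : Fin d → Bool) :
    patch S z u ∈ Pin S z := by
  rw [mem_Pin]; intro i hi; simp [patch, hi]

lemma pin_reindex (S : Finset (Fin d)) (y y' : Fin d → Bool)
    (G : (Fin d → Bool) → ℝ) :
    ∑ u ∈ Pin S y, G u = ∑ u ∈ Pin S y', G (patch S y u) := by
  refine Finset.sum_nbij' (i := patch S y') (j := patch S y) ?_ ?_ ?_ ?_ ?_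
  · intro u hu; exact patch_mem_Pin _ _ _
  · intro u hu; exact patch_mem_Pin _ _ _
  · intro u hu; funext i
    by_cases hi : i ∈ S
    · simp [patch, hi]
    · simp [patch, hi, mem_Pin.mp hu i hi]
  · intro u hu; funext i
    by_cases hi : i ∈ S
    · simp [patch, hi]
    · simp [patch, hi, mem_Pin.mp hu i hi]
  · intro u hu
    congr 1
    funext i
    by_cases hi : i ∈ S
    · simp [patch, hi]
    · simp [patch, hi, mem_Pin.mp hu i hi]


lemma split1 (t : Fin d) (S : Finset (Fin d)) (ht : t ∉ S) (z : Fin d → Bool)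
    (F : (Fin d → Bool) → ℝ) :
    ∑ x ∈ Pin (insert t S) z, F x
      = ∑ b : Bool, ∑ x ∈ Pin S (Function.update z t b), F x := by
  have hfil : ∀ b : Bool,
      Pin S (Function.update z t b) = (Pin (insert t S) z).filter (fun x => x t = b) := by
    intro b
    ext x
    rw [Finset.mem_filter, mem_Pin, mem_Pin]
    constructor
    · intro h
      refine ⟨fun i hi => ?_, ?_⟩
      · have hit : i ≠ t := fun h' => hi (h' ▸ Finset.mem_insert_self t S)
        have hi' : i ∉ S := fun h' => hi (Finset.mem_insert_of_mem h')
        have := h i hi'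
        rwa [Function.update_of_ne hit] at this
      · have := h t ht
        rwa [Function.update_self] at this
    · rintro ⟨hx, hb⟩
      intro i hi
      by_cases hit : i = t
      · subst hit; rw [Function.update_self]; exact hb
      · rw [Function.update_of_ne hit]
        exact hx i (by simp [hit, hi])
  calc ∑ x ∈ Pin (insert t S) z, F x
      = ∑ x ∈ Pin (insert t S) z, ∑ b : Bool, if x t = b then F x else 0 := by
        refine Finset.sum_congr rfl fun x _ => ?_
        simp
    _ = ∑ b : Bool, ∑ x ∈ Pin (insert t S) z, if x t = b then F x else 0 :=
        Finset.sum_comm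
    _ = ∑ b : Bool, ∑ x ∈ Pin S (Function.update z t b), F x := by
        refine Finset.sum_congr rfl fun b _ => ?_
        rw [hfil b, Finset.sum_filter]

lemma splitC (U V : Finset (Fin d)) (hUV : Disjoint U V) (z : Fin d → Bool)
    (F : (Fin d → Bool) → ℝ) :
    ∑ x ∈ Pin (U ∪ V) z, F x = ∑ y ∈ Pin V z, ∑ x ∈ Pin U y, F x := by
  induction V using Finset.induction generalizing z with
  | empty => simp [Pin_empty]
  | @insert t V' htV' ih =>
    have htU : t ∉ U := fun h => (Finset.disjoint_left.mp hUV h) (Finset.mem_insert_self t V')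
    have hUV' : Disjoint U V' := hUV.mono_right (Finset.subset_insert t V')
    have htUV' : t ∉ U ∪ V' := by simp [htU, htV']
    have h1 : U ∪ insert t V' = insert t (U ∪ V') := by
      ext i
      simp only [Finset.mem_insert, Finset.mem_union]
      tauto
    rw [h1, split1 t (U ∪ V') htUV' z F]
    rw [split1 t V' htV' z (fun y => ∑ x ∈ Pin U y, F x)]
    exact Finset.sum_congr rfl fun b _ => ih hUV' (Function.update z t b)


lemma exists_sink (E : Fin d → Fin d → Prop) (hacyc : ∀ a, ¬ Relation.TransGen E a a)
    (S : Finset (Fin d)) (hS : S.Nonempty) :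
    ∃ t ∈ S, ∀ s ∈ S, ¬ E t s := by
  haveI : IsTrans (Fin d) (fun a b => Relation.TransGen E b a) :=
    ⟨fun a b c h1 h2 => h2.trans h1⟩
  haveI : IsIrrefl (Fin d) (fun a b => Relation.TransGen E b a) :=
    ⟨fun a h => hacyc a h⟩
  have wf : WellFounded (fun a b : Fin d => Relation.TransGen E b a) :=
    Finite.wellFounded_of_trans_of_irrefl _
  obtain ⟨t, htS, hmin⟩ := wf.has_min (↑S : Set (Fin d)) (by exact_mod_cast hS)
  refine ⟨t, htS, fun s hs hEts => ?_⟩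
  exact hmin s hs (Relation.TransGen.single hEts)

lemma normSum (E : Fin d → Fin d → Prop) (hacyc : ∀ a, ¬ Relation.TransGen E a a)
    (f : Fin d → Bool → (Fin d → Bool) → ℝ)
    (hf1 : ∀ k x, ∑ b, f k b x = 1)
    (hfdep : ∀ k b x y, (∀ j, E j k → x j = y j) → f k b x = f k b y) :
    ∀ (S : Finset (Fin d)) (z : Fin d → Bool),
      ∑ x ∈ Pin S z, ∏ t ∈ S, f t (x t) x = 1 := by
  intro S
  induction S using Finset.strongInduction with
  | _ S ih =>
    intro z
    rcases S.eq_empty_or_nonempty with rfl | hne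
    · simp [Pin_empty]
    · obtain ⟨t, htS, hsink⟩ := exists_sink E hacyc S hne
      have hSins : S = insert t (S.erase t) := (Finset.insert_erase htS).symm
      set S' := S.erase t with hS'
      have htS' : t ∉ S' := Finset.notMem_erase t S
      rw [hSins, split1 t S' htS' z]
      have key : ∀ b : Bool,
          ∑ x ∈ Pin S' (Function.update z t b), ∏ s ∈ insert t S', f s (x s) x
            = ∑ x ∈ Pin S' z, f t b x * ∏ s ∈ S', f s (x s) x := by
        intro b
        rw [pin_reindex S' (Function.update z t b) z]
        refine Finset.sum_congr rfl fun x hx => ?_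
        set u := patch S' (Function.update z t b) x with hu
        have hut : u t = b := by
          simp [hu, patch, htS', Function.update_self]
        have huoff : ∀ i, i ≠ t → u i = x i := by
          intro i hit
          by_cases hiS : i ∈ S'
          · simp [hu, patch, hiS]
          · simp only [hu, patch, hiS, if_neg]
            rw [Function.update_of_ne hit]
            exact (mem_Pin.mp hx i hiS).symm
        have hEtt : ¬ E t t := fun h => hacyc t (Relation.TransGen.single h)
        rw [Finset.prod_insert htS']
        congr 1
        · rw [hut]
          refine hfdep t b u x fun i hEi => huoff i ?_
          rintro rfl; exact hEtt hEi
        · refine Finset.prod_congr rfl fun s hsS' => ?_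
          have hst : s ≠ t := fun h => htS' (h ▸ hsS')
          rw [huoff s hst]
          refine hfdep s (x s) u x fun i hEi => huoff i ?_
          rintro rfl
          exact hsink s (hSins ▸ Finset.mem_insert_of_mem hsS') hEi
      calc ∑ b : Bool, ∑ x ∈ Pin S' (Function.update z t b),
              ∏ s ∈ insert t S', f s (x s) x
          = ∑ b : Bool, ∑ x ∈ Pin S' z, f t b x * ∏ s ∈ S', f s (x s) x := by
            exact Finset.sum_congr rfl fun b _ => key b
        _ = ∑ x ∈ Pin S' z, (∑ b : Bool, f t b x) * ∏ s ∈ S', f s (x s) x := by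
            rw [Finset.sum_comm]
            exact Finset.sum_congr rfl fun x _ => (Finset.sum_mul _ _ _).symm
        _ = ∑ x ∈ Pin S' z, ∏ s ∈ S', f s (x s) x := by
            refine Finset.sum_congr rfl fun x _ => ?_
            rw [hf1 t x, one_mul]
        _ = 1 := ih S' (Finset.erase_ssubset htS) z


lemma marg (E : Fin d → Fin d → Prop) (hacyc : ∀ a, ¬ Relation.TransGen E a a)
    (f : Fin d → Bool → (Fin d → Bool) → ℝ)
    (hf1 : ∀ k x, ∑ b, f k b x = 1)
    (hfdep : ∀ k b x y, (∀ j, E j k → x j = y j) → f k b x = f k b y)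
    (A : Finset (Fin d)) (hA : ∀ t ∈ A, ∀ i, E i t → i ∈ A)
    (s : Finset (Fin d)) (hs : s ⊆ A) (w : Fin d → Bool) :
    ∑ x ∈ Pin sᶜ w, ∏ t, f t (x t) x
      = ∑ y ∈ Pin (A \ s) w, ∏ t ∈ A, f t (y t) y := by
  have hset : (sᶜ : Finset (Fin d)) = Aᶜ ∪ (A \ s) := by
    ext i
    simp only [Finset.mem_compl, Finset.mem_union, Finset.mem_sdiff]
    by_cases hiA : i ∈ A
    · simp [hiA]
    · have his : i ∉ s := fun his => hiA (hs his)
      simp [hiA, his]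
  have hdisj : Disjoint (Aᶜ : Finset (Fin d)) (A \ s) :=
    Finset.disjoint_left.mpr fun i hi hi' =>
      (Finset.mem_compl.mp hi) (Finset.mem_sdiff.mp hi').1
  rw [hset, splitC Aᶜ (A \ s) hdisj w]
  refine Finset.sum_congr rfl fun y hy => ?_
  have hinner : ∀ x ∈ Pin Aᶜ y,
      (∏ t : Fin d, f t (x t) x)
        = (∏ t ∈ A, f t (y t) y) * ∏ t ∈ Aᶜ, f t (x t) x := by
    intro x hx
    rw [← Finset.prod_mul_prod_compl A (fun t => f t (x t) x)]
    congr 1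
    refine Finset.prod_congr rfl fun t htA => ?_
    have hxy : ∀ i, i ∈ A → x i = y i := fun i hiA =>
      mem_Pin.mp hx i (by simp [hiA])
    rw [hxy t htA]
    exact hfdep t (y t) x y fun i hEi => hxy i (hA t htA i hEi)
  calc ∑ x ∈ Pin Aᶜ y, ∏ t : Fin d, f t (x t) x
      = ∑ x ∈ Pin Aᶜ y, (∏ t ∈ A, f t (y t) y) * ∏ t ∈ Aᶜ, f t (x t) x :=
        Finset.sum_congr rfl hinner
    _ = (∏ t ∈ A, f t (y t) y) * ∑ x ∈ Pin Aᶜ y, ∏ t ∈ Aᶜ, f t (x t) x := by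
        rw [Finset.mul_sum]
    _ = ∏ t ∈ A, f t (y t) y := by
        rw [normSum E hacyc f hf1 hfdep Aᶜ y, mul_one]


lemma keystep (E : Fin d → Fin d → Prop) (hacyc : ∀ a, ¬ Relation.TransGen E a a)
    (f : Fin d → Bool → (Fin d → Bool) → ℝ)
    (hf1 : ∀ k x, ∑ b, f k b x = 1)
    (hfdep : ∀ k b x y, (∀ j, E j k → x j = y j) → f k b x = f k b y)
    (A : Finset (Fin d)) (hA : ∀ t ∈ A, ∀ i, E i t → i ∈ A)
    (k : Fin d) (hk : k ∉ A)
    (s : Finset (Fin d)) (hsub : s ⊆ A)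
    (hanc : ∀ i ∈ A, Relation.TransGen E i k → i ∈ s) (w : Fin d → Bool) :
    ∑ x ∈ Pin (insert k s)ᶜ w, ∏ t, f t (x t) x
      = (∑ u ∈ Pin (Finset.univ.filter
            (fun t : Fin d => t ∉ A ∧ Relation.TransGen E t k)) w,
          f k (u k) u * ∏ t ∈ Finset.univ.filter
            (fun t : Fin d => t ∉ A ∧ Relation.TransGen E t k), f t (u t) u) *
        ∑ x ∈ Pin sᶜ w, ∏ t, f t (x t) x := by
  set R : Finset (Fin d) :=
    Finset.univ.filter (fun t : Fin d => t ∉ A ∧ Relation.TransGen E t k) with hR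
  set B : Finset (Fin d) := insert k A with hB
  have hmemR : ∀ t, t ∈ R ↔ (t ∉ A ∧ Relation.TransGen E t k) := by
    intro t; simp [hR]
  have hkR : k ∉ R := fun h => hacyc k ((hmemR k).mp h).2
  have hcases : ∀ i, Relation.TransGen E i k → i ∈ A ∨ i ∈ R := by
    intro i hi
    by_cases hiA : i ∈ A
    · exact Or.inl hiA
    · exact Or.inr ((hmemR i).mpr ⟨hiA, hi⟩)
  have hkB : k ∈ B := Finset.mem_insert_self k A
  have hRB : R ⊆ Bᶜ := by
    intro t ht
    rw [Finset.mem_compl, hB, Finset.mem_insert]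
    rintro (rfl | htA)
    · exact hkR ht
    · exact ((hmemR t).mp ht).1 htA
  -- the full product splits over A and its complement, with A-part pinned
  have hset1 : ((insert k s)ᶜ : Finset (Fin d)) = Bᶜ ∪ (A \ s) := by
    ext i
    simp only [Finset.mem_compl, Finset.mem_union, Finset.mem_sdiff, hB,
      Finset.mem_insert, not_or]
    by_cases hiA : i ∈ A
    · have hik : i ≠ k := fun h => hk (h ▸ hiA)
      simp [hiA, hik]
    · have his : i ∉ s := fun h => hiA (hsub h)
      simp [hiA, his]
  have hdisj1 : Disjoint (Bᶜ : Finset (Fin d)) (A \ s) := by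
    refine Finset.disjoint_left.mpr fun i hi hi' => ?_
    exact (Finset.mem_compl.mp hi)
      (Finset.mem_insert_of_mem (Finset.mem_sdiff.mp hi').1)
  rw [hset1, splitC Bᶜ (A \ s) hdisj1 w]
  set NN : Finset (Fin d) := Bᶜ \ R with hNN
  have hsetB : (Bᶜ : Finset (Fin d)) = NN ∪ R := (Finset.sdiff_union_of_subset hRB).symm
  have hdisjNR : Disjoint NN R := Finset.sdiff_disjoint
  have hAc : (Aᶜ : Finset (Fin d)) = insert k Bᶜ := by
    ext i
    simp only [Finset.mem_compl, Finset.mem_insert, hB]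
    by_cases hik : i = k
    · subst hik; simp [hk]
    · simp [hik]
  have hkBc : k ∉ (Bᶜ : Finset (Fin d)) := by simp [hB]
  have hNNA : ∀ i ∈ NN, i ∉ A := by
    intro i hi
    have := Finset.mem_compl.mp (Finset.mem_sdiff.mp hi).1
    rw [hB, Finset.mem_insert] at this
    tauto
  have hNNR : ∀ i ∈ NN, i ∉ R := fun i hi => (Finset.mem_sdiff.mp hi).2
  -- G is the weight function on the ancestor block
  set G : (Fin d → Bool) → ℝ :=
    fun u => f k (u k) u * ∏ t ∈ R, f t (u t) u with hG
  -- G only depends on coordinates in R ∪ A-ancestors-of-k ∪ {k}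
  have hGdep : ∀ u v : Fin d → Bool,
      (∀ i, (i ∈ R ∨ i = k ∨ (i ∈ A ∧ Relation.TransGen E i k)) → u i = v i) →
      G u = G v := by
    intro u v huv
    have hpark : ∀ i, E i k → u i = v i := by
      intro i hEi
      rcases hcases i (Relation.TransGen.single hEi) with hiA | hiR
      · exact huv i (Or.inr (Or.inr ⟨hiA, Relation.TransGen.single hEi⟩))
      · exact huv i (Or.inl hiR)
    have hparR : ∀ t ∈ R, ∀ i, E i t → u i = v i := by
      intro t ht i hEi
      have htk : Relation.TransGen E t k := ((hmemR t).mp ht).2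
      have hik : Relation.TransGen E i k := (Relation.TransGen.single hEi).trans htk
      rcases hcases i hik with hiA | hiR
      · exact huv i (Or.inr (Or.inr ⟨hiA, hik⟩))
      · exact huv i (Or.inl hiR)
    have huk : u k = v k := huv k (Or.inr (Or.inl rfl))
    have h1 : f k (u k) u = f k (v k) v := by
      rw [huk]; exact hfdep k (v k) u v hpark
    have h2 : ∏ t ∈ R, f t (u t) u = ∏ t ∈ R, f t (v t) v := by
      refine Finset.prod_congr rfl fun t ht => ?_
      rw [huv t (Or.inl ht)]
      exact hfdep t (v t) u v (hparR t ht)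
    simp only [hG]
    rw [h1, h2]
  -- inner computation for each pinned y
  have hinner : ∀ y ∈ Pin (A \ s) w,
      ∑ x ∈ Pin Bᶜ y, ∏ t : Fin d, f t (x t) x
        = (∏ t ∈ A, f t (y t) y) * ∑ u ∈ Pin R w, G u := by
    intro y hy
    have step1 : ∀ x ∈ Pin Bᶜ y,
        (∏ t : Fin d, f t (x t) x)
          = (∏ t ∈ A, f t (y t) y) * ∏ t ∈ Aᶜ, f t (x t) x := by
      intro x hx
      rw [← Finset.prod_mul_prod_compl A (fun t => f t (x t) x)]
      congr 1
      refine Finset.prod_congr rfl fun t htA => ?_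
      have hxy : ∀ i, i ∈ A → x i = y i := by
        intro i hiA
        refine mem_Pin.mp hx i ?_
        simp [hB, hiA]
      rw [hxy t htA]
      exact hfdep t (y t) x y fun i hEi => hxy i (hA t htA i hEi)
    have step2 : ∀ x ∈ Pin Bᶜ y,
        (∏ t ∈ Aᶜ, f t (x t) x)
          = f k (x k) x * ∏ t ∈ Bᶜ, f t (x t) x := by
      intro x _
      rw [hAc, Finset.prod_insert hkBc]
    calc ∑ x ∈ Pin Bᶜ y, ∏ t : Fin d, f t (x t) x
        = ∑ x ∈ Pin Bᶜ y,
            (∏ t ∈ A, f t (y t) y) * (f k (x k) x * ∏ t ∈ Bᶜ, f t (x t) x) := by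
          refine Finset.sum_congr rfl fun x hx => ?_
          rw [step1 x hx, step2 x hx]
      _ = (∏ t ∈ A, f t (y t) y) *
            ∑ x ∈ Pin Bᶜ y, f k (x k) x * ∏ t ∈ Bᶜ, f t (x t) x := by
          rw [Finset.mul_sum]
      _ = (∏ t ∈ A, f t (y t) y) * ∑ u ∈ Pin R w, G u := by
          congr 1
          -- split the free coordinates into NN and R
          rw [hsetB, splitC NN R hdisjNR y]
          have hin2 : ∀ u ∈ Pin R y,
              ∑ x ∈ Pin NN u, f k (x k) x * ∏ t ∈ NN ∪ R, f t (x t) x = G u := by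
            intro u hu
            have hxu : ∀ x ∈ Pin NN u, ∀ i, i ∉ NN → x i = u i :=
              fun x hx i hi => mem_Pin.mp hx i hi
            have hstep : ∀ x ∈ Pin NN u,
                f k (x k) x * ∏ t ∈ NN ∪ R, f t (x t) x
                  = G u * ∏ t ∈ NN, f t (x t) x := by
              intro x hx
              have hkNN : k ∉ NN := fun h => hkBc ((Finset.mem_sdiff.mp h).1)
              have hxk : x k = u k := hxu x hx k hkNN
              have hfk : f k (x k) x = f k (u k) u := by
                rw [hxk]
                refine hfdep k (u k) x u fun i hEi => ?_
                refine hxu x hx i ?_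
                rcases hcases i (Relation.TransGen.single hEi) with hiA | hiR
                · exact fun h => hNNA i h hiA
                · exact fun h => hNNR i h hiR
              have hfR : ∏ t ∈ R, f t (x t) x = ∏ t ∈ R, f t (u t) u := by
                refine Finset.prod_congr rfl fun t ht => ?_
                have htNN : t ∉ NN := fun h => hNNR t h ht
                rw [hxu x hx t htNN]
                refine hfdep t (u t) x u fun i hEi => ?_
                refine hxu x hx i ?_
                have htk : Relation.TransGen E t k := ((hmemR t).mp ht).2
                have hik : Relation.TransGen E i k :=
                  (Relation.TransGen.single hEi).trans htk
                rcases hcases i hik with hiA | hiR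
                · exact fun h => hNNA i h hiA
                · exact fun h => hNNR i h hiR
              rw [Finset.prod_union hdisjNR, hfk, hfR, hG]
              ring
            calc ∑ x ∈ Pin NN u, f k (x k) x * ∏ t ∈ NN ∪ R, f t (x t) x
                = ∑ x ∈ Pin NN u, G u * ∏ t ∈ NN, f t (x t) x :=
                  Finset.sum_congr rfl hstep
              _ = G u * ∑ x ∈ Pin NN u, ∏ t ∈ NN, f t (x t) x := by
                  rw [Finset.mul_sum]
              _ = G u := by rw [normSum E hacyc f hf1 hfdep NN u, mul_one]
          calc ∑ u ∈ Pin R y, ∑ x ∈ Pin NN u, f k (x k) x * ∏ t ∈ NN ∪ R, f t (x t) x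
              = ∑ u ∈ Pin R y, G u := Finset.sum_congr rfl hin2
            _ = ∑ u ∈ Pin R w, G u := by
                rw [pin_reindex R y w]
                refine Finset.sum_congr rfl fun u hu => ?_
                refine (hGdep _ _ ?_).symm
                intro i hi
                by_cases hiR : i ∈ R
                · simp [patch, hiR]
                · have hyw : y i = w i := by
                    refine mem_Pin.mp hy i ?_
                    rcases hi with hiR' | rfl | ⟨hiA, hik⟩
                    · exact absurd hiR' hiR
                    · simp [Finset.mem_sdiff, hk]
                    · have his : i ∈ s := hanc i hiA hik
                      simp [Finset.mem_sdiff, his]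
                  have hui : u i = w i := mem_Pin.mp hu i hiR
                  simp [patch, hiR, hyw, hui]
  calc ∑ y ∈ Pin (A \ s) w, ∑ x ∈ Pin Bᶜ y, ∏ t : Fin d, f t (x t) x
      = ∑ y ∈ Pin (A \ s) w, (∏ t ∈ A, f t (y t) y) * ∑ u ∈ Pin R w, G u :=
        Finset.sum_congr rfl hinner
    _ = (∑ u ∈ Pin R w, G u) * ∑ y ∈ Pin (A \ s) w, ∏ t ∈ A, f t (y t) y := by
        rw [← Finset.sum_mul, mul_comm]
    _ = (∑ u ∈ Pin R w, G u) * ∑ x ∈ Pin sᶜ w, ∏ t, f t (x t) x := by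
        rw [marg E hacyc f hf1 hfdep A hA s hsub w]

end PFAux

section AsetFacts

lemma Aset_mono {d : ℕ} (E : Fin d → Fin d → Prop) : ∀ j, Aset E j ⊆ Aset E (j+1) := by
  intro j
  induction j with
  | zero => simp [Aset]
  | succ j ih =>
    intro x hx
    rw [Aset, Finset.mem_filter] at hx ⊢
    exact ⟨Finset.mem_univ x, fun i hi => ih (hx.2 i hi)⟩

lemma Aset_closed {d : ℕ} (E : Fin d → Fin d → Prop) :
    ∀ j, ∀ t ∈ Aset E j, ∀ i, E i t → i ∈ Aset E j := by
  intro j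
  cases j with
  | zero => simp [Aset]
  | succ j =>
    intro t ht i hEi
    rw [Aset, Finset.mem_filter] at ht
    exact Aset_mono E j (ht.2 i hEi)

end AsetFacts

/-- Let `E` be a polyforest (a DAG whose undirected skeleton is
acyclic) over which the strictly positive distribution `p` factorizes, let
`A_j = Aset E j` be an ancestral set of the layer decomposition, and let `m` be
the Markov boundary of `X_k` in `A_j` (a minimal Markov blanket). Then every
`c ∈ m` has a directed path in `E` from `c` to `k`. -/
theorem polyforest_markov_boundary_directed_path
    {d : ℕ} (p : (Fin d → Bool) → ℝ)
    (hpos : ∀ x, 0 < p x) (hsum : ∑ x, p x = 1)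
    (E : Fin d → Fin d → Prop) (hacyc : ∀ a, ¬ Relation.TransGen E a a)
    (hforest : ∀ G : SimpleGraph (Fin d),
      (∀ a b, G.Adj a b ↔ (E a b ∨ E b a)) → G.IsAcyclic)
    (hfact : Factorizes E p)
    (j : ℕ) (k : Fin d) (hk : k ∉ Aset E j)
    (m : Finset (Fin d)) (hmsub : m ⊆ Aset E j)
    (hblanket : CondIndepRV p (fun x => x k)
      (restr (β := Bool) (Aset E j \ m)) (restr m))
    (hmin : ∀ m' ⊆ Aset E j,
      CondIndepRV p (fun x => x k) (restr (β := Bool) (Aset E j \ m')) (restr m') →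
      m ⊆ m') :
    ∀ c ∈ m, Relation.TransGen E c k := by
  intro c hc
  classical
  obtain ⟨f, hf0, hf1, hfdep, hfp⟩ := hfact
  set A : Finset (Fin d) := Aset E j with hAdef
  have hA : ∀ t ∈ A, ∀ i, E i t → i ∈ A := Aset_closed E j
  set anc : Finset (Fin d) := A.filter (fun i => Relation.TransGen E i k) with hancdef
  have hancsub : anc ⊆ A := Finset.filter_subset _ _
  have hancanc : ∀ i ∈ A, Relation.TransGen E i k → i ∈ anc := fun i hi hik =>
    Finset.mem_filter.mpr ⟨hi, hik⟩
  have hCI : CondIndepRV p (fun x => x k)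
      (restr (β := Bool) (A \ anc)) (restr anc) := by
    intro a b c0
    -- the common pinned configuration
    set w : Fin d → Bool := fun i =>
      if i = k then a
      else if h : i ∈ anc then c0 ⟨i, h⟩
      else if h : i ∈ A \ anc then b ⟨i, h⟩
      else false with hwdef
    have hwk : w k = a := by simp [hwdef]
    have hwanc : ∀ i (h : i ∈ anc), w i = c0 ⟨i, h⟩ := by
      intro i h
      have hik : i ≠ k := fun e => hk (e ▸ hancsub h)
      simp [hwdef, hik, h]
    have hwb : ∀ i (h : i ∈ A \ anc), w i = b ⟨i, h⟩ := by
      intro i h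
      have hiA : i ∈ A := (Finset.mem_sdiff.mp h).1
      have hna : i ∉ anc := (Finset.mem_sdiff.mp h).2
      have hik : i ≠ k := fun e => hk (e ▸ hiA)
      simp [hwdef, hik, hna, h, hiA]
    -- translation from prE of pin-events to sums over Pin sets
    have hprE : ∀ (s : Finset (Fin d)) (P : (Fin d → Bool) → Prop),
        (∀ x, P x ↔ ∀ i ∈ s, x i = w i) →
        prE p {ω | P ω} = ∑ x ∈ PFAux.Pin sᶜ w, ∏ t, f t (x t) x := by
      intro s P hP
      have h1 : prE p {ω | P ω} = ∑ ω ∈ Finset.univ.filter (fun ω => P ω), p ω := by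
        rw [prE, Finset.sum_filter]
        exact Finset.sum_congr rfl fun ω _ => by
          by_cases hω : P ω <;> simp [hω, Set.mem_setOf_eq]
      have h2 : Finset.univ.filter (fun ω => P ω) = PFAux.Pin sᶜ w := by
        ext x
        rw [Finset.mem_filter, PFAux.mem_Pin]
        simp only [Finset.mem_univ, true_and, Finset.mem_compl, not_not]
        exact (hP x).trans (by simp)
      rw [h1, h2]
      exact Finset.sum_congr rfl fun x _ => hfp x
    -- characterizations of the four events
    have hanciff : ∀ x : Fin d → Bool,
        restr (β := Bool) anc x = c0 ↔ ∀ i ∈ anc, x i = w i := by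
      intro x
      constructor
      · intro h i hi
        rw [hwanc i hi]
        exact congrFun h ⟨i, hi⟩
      · intro h
        funext i2
        obtain ⟨i, hi⟩ := i2
        show x i = c0 ⟨i, hi⟩
        rw [← hwanc i hi]
        exact h i hi
    have hAiff : ∀ x : Fin d → Bool,
        (restr (β := Bool) (A \ anc) x = b ∧ restr (β := Bool) anc x = c0) ↔
          ∀ i ∈ A, x i = w i := by
      intro x
      constructor
      · rintro ⟨h2, h3⟩ i hiA
        by_cases hia : i ∈ anc
        · rw [hwanc i hia]
          exact congrFun h3 ⟨i, hia⟩
        · have hmem : i ∈ A \ anc := Finset.mem_sdiff.mpr ⟨hiA, hia⟩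
          rw [hwb i hmem]
          exact congrFun h2 ⟨i, hmem⟩
      · intro h
        constructor
        · funext i2
          obtain ⟨i, hi⟩ := i2
          show x i = b ⟨i, hi⟩
          rw [← hwb i hi]
          exact h i ((Finset.mem_sdiff.mp hi).1)
        · funext i2
          obtain ⟨i, hi⟩ := i2
          show x i = c0 ⟨i, hi⟩
          rw [← hwanc i hi]
          exact h i (hancsub hi)
    -- the four probabilities
    have hp1 : prE p {ω : Fin d → Bool |
          ω k = a ∧ restr (β := Bool) (A \ anc) ω = b ∧ restr (β := Bool) anc ω = c0}
        = ∑ x ∈ PFAux.Pin (insert k A)ᶜ w, ∏ t, f t (x t) x := by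
      refine hprE (insert k A) _ fun x => ?_
      rw [Finset.forall_mem_insert, hwk]
      exact and_congr Iff.rfl (hAiff x)
    have hp2 : prE p {ω : Fin d → Bool | restr (β := Bool) anc ω = c0}
        = ∑ x ∈ PFAux.Pin ancᶜ w, ∏ t, f t (x t) x :=
      hprE anc _ hanciff
    have hp3 : prE p {ω : Fin d → Bool | ω k = a ∧ restr (β := Bool) anc ω = c0}
        = ∑ x ∈ PFAux.Pin (insert k anc)ᶜ w, ∏ t, f t (x t) x := by
      refine hprE (insert k anc) _ fun x => ?_
      rw [Finset.forall_mem_insert, hwk]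
      exact and_congr Iff.rfl (hanciff x)
    have hp4 : prE p {ω : Fin d → Bool |
          restr (β := Bool) (A \ anc) ω = b ∧ restr (β := Bool) anc ω = c0}
        = ∑ x ∈ PFAux.Pin Aᶜ w, ∏ t, f t (x t) x :=
      hprE A _ hAiff
    have hkey1 := PFAux.keystep E hacyc f hf1 hfdep A hA k hk A subset_rfl
      (fun i hi _ => hi) w
    have hkey2 := PFAux.keystep E hacyc f hf1 hfdep A hA k hk anc hancsub
      hancanc w
    show prE p {ω : Fin d → Bool |
          ω k = a ∧ restr (β := Bool) (A \ anc) ω = b ∧ restr (β := Bool) anc ω = c0} *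
        prE p {ω : Fin d → Bool | restr (β := Bool) anc ω = c0}
      = prE p {ω : Fin d → Bool | ω k = a ∧ restr (β := Bool) anc ω = c0} *
        prE p {ω : Fin d → Bool |
          restr (β := Bool) (A \ anc) ω = b ∧ restr (β := Bool) anc ω = c0}
    rw [hp1, hp2, hp3, hp4, hkey1, hkey2]
    ring
  have hcanc : c ∈ anc := hmin anc hancsub hCI hc
  exact (Finset.mem_filter.mp hcanc).2


end
end
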